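/- arXiv:2107.14488 — 6 statements merged into one kernel-verified Lean document; each statement's English description precedes it below -/
import Mathlib

section
/- Let N be a natural number, let β : Fin N → ℝ satisfy β k > 0 for all k, and let n : Fin N → ℕ be a multi-index. Then (∏_{k} √(β k/(2π))) · ∫_{ℝ^N} (∏_{k} (x k)^{n k}) · exp(−(1/2)·Σ_{k} β k · (x k)²) dx equals the mixed partial derivative of order n k in each variable y k of the function y ↦ exp(Σ_{k} (y k)²/(2·β k)), evaluated at y = 0. -/
open MeasureTheory Real

/-- The partial derivative of `f : (Fin N → ℝ) → ℝ` in the `k`-th coordinate direction. -/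
noncomputable def partialDeriv' {N : ℕ} (k : Fin N) (f : (Fin N → ℝ) → ℝ) :
    (Fin N → ℝ) → ℝ :=
  fun y => fderiv ℝ f y (Pi.single k 1)

/-- The mixed partial derivative of multi-order `n`: apply `∂/∂y k` exactly `n k` times
for each `k` (in a fixed order, running through `Fin N`). -/
noncomputable def mixedPartialDeriv {N : ℕ} (n : Fin N → ℕ) (f : (Fin N → ℝ) → ℝ) :
    (Fin N → ℝ) → ℝ :=
  (List.finRange N).foldr (fun k g => (partialDeriv' k)^[n k] g) f

/-!
Both sides factor over the coordinates: the integrand is a product of one-variable functions, so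
Fubini splits the integral, and the generating exponential is a product of functions of one
variable each, so its mixed partial derivative is the product of ordinary iterated derivatives.
In one variable, integration by parts gives `m (n + 2) = (n + 1) / b * m n` for the normalized
moments `m n` of `exp (-(b / 2) x²)`, and differentiating `g' = (t / b) g` with Leibniz' rule
gives the same recursion for the derivatives `g⁽ⁿ⁾ 0` of `g t = exp (t² / (2 b))`; the initial
values `1, 0` agree.
-/

open scoped ContDiff

theorem integrable_pow_mul_exp_neg_mul_sq {b : ℝ} (hb : 0 < b) (n : ℕ) :
    Integrable fun x : ℝ => x ^ n * exp (-b * x ^ 2) := by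
  simpa [rpow_natCast] using
    integrable_rpow_mul_exp_neg_mul_sq hb (s := n) (by linarith [n.cast_nonneg (α := ℝ)])

theorem integral_mul_exp_neg_mul_sq_eq_zero (b : ℝ) :
    ∫ x : ℝ, x * exp (-b * x ^ 2) = 0 := by
  have h := integral_neg_eq_self (fun x : ℝ => x * exp (-b * x ^ 2)) volume
  simp only [neg_mul, neg_sq, integral_neg] at h ⊢
  linarith

theorem integral_pow_add_two_mul_exp_neg_mul_sq {b : ℝ} (hb : 0 < b) (n : ℕ) :
    ∫ x : ℝ, x ^ (n + 2) * exp (-b * x ^ 2) =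
      (n + 1) / (2 * b) * ∫ x : ℝ, x ^ n * exp (-b * x ^ 2) := by
  have hu (x : ℝ) : HasDerivAt (fun x : ℝ => x ^ (n + 1)) ((n + 1) * x ^ n) x := by
    simpa using hasDerivAt_pow (n + 1) x
  have hv (x : ℝ) :
      HasDerivAt (fun x : ℝ => exp (-b * x ^ 2)) (-2 * b * x * exp (-b * x ^ 2)) x := by
    convert ((hasDerivAt_pow 2 x).const_mul (-b)).exp using 1
    ring
  have parts := integral_mul_deriv_eq_deriv_mul_of_integrable (fun x _ => hu x) (fun x _ => hv x)
    (((integrable_pow_mul_exp_neg_mul_sq hb (n + 2)).const_mul (-2 * b)).congr <|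
      .of_forall fun x => by simp only [Pi.mul_apply]; ring)
    (((integrable_pow_mul_exp_neg_mul_sq hb n).const_mul ((n : ℝ) + 1)).congr <|
      .of_forall fun x => by simp only [Pi.mul_apply]; ring)
    (integrable_pow_mul_exp_neg_mul_sq hb (n + 1))
  have lhs : (fun x : ℝ => x ^ (n + 1) * (-2 * b * x * exp (-b * x ^ 2))) =
      fun x => -2 * b * (x ^ (n + 2) * exp (-b * x ^ 2)) := by
    funext x; ring
  have rhs : (fun x : ℝ => (n + 1) * x ^ n * exp (-b * x ^ 2)) =
      fun x => (n + 1) * (x ^ n * exp (-b * x ^ 2)) := by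
    funext x; ring
  rw [lhs, rhs, integral_const_mul, integral_const_mul] at parts
  rw [div_mul_eq_mul_div, eq_div_iff (by positivity)]
  linarith

theorem deriv_exp_sq_div (b : ℝ) :
    deriv (fun t : ℝ => exp (t ^ 2 / (2 * b))) = fun t => b⁻¹ * (t * exp (t ^ 2 / (2 * b))) := by
  funext t
  have h := ((hasDerivAt_pow 2 t).div_const (2 * b)).exp
  rw [h.deriv]
  field_simp
  ring

theorem iteratedDeriv_exp_sq_div_add_two_zero (b : ℝ) (n : ℕ) :
    iteratedDeriv (n + 2) (fun t : ℝ => exp (t ^ 2 / (2 * b))) 0 =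
      (n + 1) / b * iteratedDeriv n (fun t : ℝ => exp (t ^ 2 / (2 * b))) 0 := by
  rw [iteratedDeriv_succ', deriv_exp_sq_div, iteratedDeriv_const_mul_field,
    iteratedDeriv_fun_mul (by fun_prop) (by fun_prop), Finset.sum_eq_single 1]
  · simp only [Nat.choose_one_right, Nat.cast_add, Nat.cast_one, iteratedDeriv_fun_id_zero,
      ↓reduceIte, mul_one, add_tsub_cancel_right]
    ring
  · intro i _ hi
    simp [iteratedDeriv_fun_id_zero, hi]
  · simp

theorem gaussian_moment_eq_iteratedDeriv_exp_sq_div {b : ℝ} (hb : 0 < b) (n : ℕ) :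
    √(b / (2 * π)) * ∫ x : ℝ, x ^ n * exp (-(b / 2) * x ^ 2) =
      iteratedDeriv n (fun t : ℝ => exp (t ^ 2 / (2 * b))) 0 := by
  induction n using Nat.twoStepInduction with
  | zero =>
    simp only [pow_zero, one_mul, integral_gaussian, iteratedDeriv_zero]
    rw [← sqrt_mul (by positivity), show b / (2 * π) * (π / (b / 2)) = 1 by field_simp]
    simp
  | one =>
    simp only [pow_one, integral_mul_exp_neg_mul_sq_eq_zero]
    simp [deriv_exp_sq_div]
  | more n ih _ =>
    rw [integral_pow_add_two_mul_exp_neg_mul_sq (by positivity),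
      iteratedDeriv_exp_sq_div_add_two_zero, ← ih]
    field_simp

section ProductFunctions

variable {N : ℕ}

theorem partialDeriv'_prod {G : Fin N → ℝ → ℝ} (hG : ∀ j, Differentiable ℝ (G j)) (k : Fin N) :
    partialDeriv' k (fun y => ∏ j, G j (y j)) =
      fun y => ∏ j, Function.update G k (deriv (G k)) j (y j) := by
  funext y
  have hfactor (j : Fin N) (_ : j ∈ Finset.univ) : HasFDerivAt (fun y : Fin N → ℝ => G j (y j))
      (deriv (G j) (y j) • ContinuousLinearMap.proj (R := ℝ) j) y :=
    (hG j (y j)).hasDerivAt.comp_hasFDerivAt y (hasFDerivAt_apply j y)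
  rw [partialDeriv', (HasFDerivAt.finsetProd hfactor).fderiv]
  simp only [sum_apply, smul_apply, ContinuousLinearMap.proj_apply, Pi.single_apply, smul_eq_mul,
    mul_ite, mul_one, mul_zero, Finset.sum_ite_eq', Finset.mem_univ, ↓reduceIte]
  rw [← Finset.prod_erase_mul _ _ (Finset.mem_univ k), Function.update_self]
  congr 1
  refine Finset.prod_congr rfl fun j hj => ?_
  rw [Function.update_of_ne (Finset.ne_of_mem_erase hj)]

theorem iterate_partialDeriv'_prod {G : Fin N → ℝ → ℝ} (hG : ∀ j, ContDiff ℝ ∞ (G j))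
    (k : Fin N) (m : ℕ) :
    (partialDeriv' k)^[m] (fun y => ∏ j, G j (y j)) =
      fun y => ∏ j, Function.update G k (deriv^[m] (G k)) j (y j) := by
  induction m with
  | zero => simp
  | succ m ih =>
    have hdiff (j : Fin N) : Differentiable ℝ (Function.update G k (deriv^[m] (G k)) j) := by
      rcases eq_or_ne j k with rfl | hjk
      · simpa using ((hG j).iterate_deriv m).differentiable (by simp)
      · simpa [hjk] using (hG j).differentiable (by simp)
    rw [Function.iterate_succ_apply', ih, partialDeriv'_prod hdiff, Function.update_idem,
      Function.update_self, Function.iterate_succ_apply']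

theorem foldr_iterate_partialDeriv'_prod {G : Fin N → ℝ → ℝ} (hG : ∀ j, ContDiff ℝ ∞ (G j))
    (n : Fin N → ℕ) (l : List (Fin N)) :
    l.foldr (fun k g => (partialDeriv' k)^[n k] g) (fun y => ∏ j, G j (y j)) =
      fun y => ∏ j, deriv^[l.count j * n j] (G j) (y j) := by
  induction l with
  | nil => simp
  | cons k l ih =>
    rw [List.foldr_cons, ih, iterate_partialDeriv'_prod (fun j => (hG j).iterate_deriv _)]
    funext y
    refine Finset.prod_congr rfl fun j _ => ?_
    rcases eq_or_ne j k with rfl | hjk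
    · simp [← Function.iterate_add_apply, add_mul, add_comm]
    · simp [hjk, hjk.symm]

theorem mixedPartialDeriv_prod {G : Fin N → ℝ → ℝ} (hG : ∀ j, ContDiff ℝ ∞ (G j))
    (n : Fin N → ℕ) :
    mixedPartialDeriv n (fun y => ∏ j, G j (y j)) =
      fun y => ∏ j, iteratedDeriv (n j) (G j) (y j) := by
  simp [mixedPartialDeriv, foldr_iterate_partialDeriv'_prod hG, iteratedDeriv_eq_iterate]

end ProductFunctions

/-- The Gaussian integral of a monomial equals the mixed partial derivative of the
generating exponential `exp (∑ k, (y k)^2 / (2 β k))` at `y = 0`. -/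
theorem gaussian_moment_eq_mixedPartialDeriv (N : ℕ) (β : Fin N → ℝ)
    (hβ : ∀ k, 0 < β k) (n : Fin N → ℕ) :
    (∏ k, Real.sqrt (β k / (2 * π))) *
      ∫ x : Fin N → ℝ, (∏ k, (x k) ^ (n k)) * Real.exp (-(1 / 2) * ∑ k, β k * (x k) ^ 2) =
    mixedPartialDeriv n (fun y => Real.exp (∑ k, (y k) ^ 2 / (2 * β k))) 0 := by
  have h_integrand :
      (fun x : Fin N → ℝ => (∏ k, x k ^ n k) * exp (-(1 / 2) * ∑ k, β k * x k ^ 2)) =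
        fun x => ∏ k, x k ^ n k * exp (-(β k / 2) * x k ^ 2) := by
    funext x
    rw [Finset.prod_mul_distrib, ← exp_sum, Finset.mul_sum]
    congr 2
    exact Finset.sum_congr rfl fun k _ => by ring
  have h_generating : (fun y : Fin N → ℝ => exp (∑ k, y k ^ 2 / (2 * β k))) =
      fun y => ∏ k, exp (y k ^ 2 / (2 * β k)) := by
    simp only [exp_sum]
  rw [h_integrand,
    integral_fintype_prod_volume_eq_prod fun k t => t ^ n k * exp (-(β k / 2) * t ^ 2),
    ← Finset.prod_mul_distrib, h_generating,
    mixedPartialDeriv_prod (G := fun k t => exp (t ^ 2 / (2 * β k))) (fun k => by fun_prop)]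
  exact Finset.prod_congr rfl fun k _ => gaussian_moment_eq_iteratedDeriv_exp_sq_div (hβ k) (n k)
end

section
/- Define I : ℝ → ℂ by I(α) = (1/√(2π)) · ∫_ℝ exp(−x²/2 + i·α·x³) dx. Then I is twice differentiable on ℝ and satisfies, for all α ∈ ℝ, the differential equation 27·α³·I''(α) + (1 + 81·α²)·I'(α) + 15·α·I(α) = 0. -/
open MeasureTheory Real Complex

/-!
Differentiating under the integral sign, `I⁽ⁿ⁾(α)` is `(2π)^{-1/2} ∫ (ix³)ⁿ w_α`, where
`w_α(x) = exp(-x²/2 + iαx³)`; all these integrals converge since `|w_α(x)| = exp(-x²/2)`.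
The combination `27α³(ix³)² + (1 + 81α²)(ix³) + 15α` of the integrands is `(P w_α)' / w_α` for
`P = 9iα²x⁴ + 3αx³ - ix² + 15αx - 2i`, so the ODE reduces to `∫ (P w_α)' = 0`, which holds
because `P w_α` and its derivative are integrable.
-/

/-- The cubic-model integral `I(α) = (1/√(2π)) ∫ exp(-x²/2 + iαx³) dx`. -/
noncomputable def cubicI (α : ℝ) : ℂ :=
  (1 / Real.sqrt (2 * π) : ℝ) *
    ∫ x : ℝ, Complex.exp (-(x : ℂ) ^ 2 / 2 + Complex.I * α * (x : ℂ) ^ 3)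

open Polynomial

noncomputable def cubicWeight (α x : ℝ) : ℂ :=
  cexp (-(x : ℂ) ^ 2 / 2 + Complex.I * α * (x : ℂ) ^ 3)

noncomputable def cubicMoment (n : ℕ) (α : ℝ) : ℂ :=
  ∫ x : ℝ, (Complex.I * (x : ℂ) ^ 3) ^ n * cubicWeight α x

lemma norm_cubicWeight (α x : ℝ) : ‖cubicWeight α x‖ = rexp (-x ^ 2 / 2) := by
  rw [cubicWeight, Complex.norm_exp]
  congr 1
  simp [← ofReal_pow]

lemma continuous_cubicWeight (α : ℝ) : Continuous (cubicWeight α) := by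
  unfold cubicWeight; fun_prop

lemma integrable_pow_mul_exp_neg_sq_div_two (n : ℕ) :
    Integrable fun x : ℝ => x ^ n * rexp (-x ^ 2 / 2) := by
  have h := integrable_rpow_mul_exp_neg_mul_sq (b := 1 / 2) (by norm_num) (s := n)
    (by linarith [n.cast_nonneg (α := ℝ)])
  refine h.congr (Filter.Eventually.of_forall fun x => ?_)
  simp only [rpow_natCast]
  ring_nf

lemma integrable_pow_mul_cubicWeight (n : ℕ) (α : ℝ) :
    Integrable fun x : ℝ => (x : ℂ) ^ n * cubicWeight α x := by
  refine (integrable_pow_mul_exp_neg_sq_div_two n).norm.mono'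
    ((continuous_ofReal.pow n).mul (continuous_cubicWeight α)).aestronglyMeasurable
    (Filter.Eventually.of_forall fun x => ?_)
  simp [norm_cubicWeight]

lemma integrable_eval_mul_cubicWeight (p : ℂ[X]) (α : ℝ) :
    Integrable fun x : ℝ => p.eval (x : ℂ) * cubicWeight α x := by
  induction p using Polynomial.induction_on' with
  | add p q hp hq =>
    simp only [eval_add, add_mul]
    exact hp.add hq
  | monomial n a => simpa [mul_assoc] using (integrable_pow_mul_cubicWeight n α).const_mul a

lemma integrable_cubicMoment_integrand (n : ℕ) (α : ℝ) :
    Integrable fun x : ℝ => (Complex.I * (x : ℂ) ^ 3) ^ n * cubicWeight α x := by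
  convert integrable_eval_mul_cubicWeight ((C Complex.I * X ^ 3) ^ n) α using 3
  simp

lemma hasDerivAt_cubicWeight_param (α x : ℝ) :
    HasDerivAt (fun β : ℝ => cubicWeight β x) (Complex.I * (x : ℂ) ^ 3 * cubicWeight α x) α := by
  have h := ((hasDerivAt_id α).ofReal_comp.const_mul Complex.I |>.mul_const ((x : ℂ) ^ 3)
    |>.const_add (-(x : ℂ) ^ 2 / 2)).cexp
  exact h.congr_deriv (by simp only [cubicWeight, id, ofReal_one]; ring)

lemma hasDerivAt_cubicMoment (n : ℕ) (α : ℝ) :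
    HasDerivAt (cubicMoment n) (cubicMoment (n + 1) α) α := by
  refine (hasDerivAt_integral_of_dominated_loc_of_deriv_le (x₀ := α) Filter.univ_mem
    (F' := fun β x => (Complex.I * (x : ℂ) ^ 3) ^ (n + 1) * cubicWeight β x)
    (bound := fun x => |x| ^ (3 * (n + 1)) * rexp (-x ^ 2 / 2))
    (Filter.Eventually.of_forall fun β => (integrable_cubicMoment_integrand n β).1)
    (integrable_cubicMoment_integrand n α) (integrable_cubicMoment_integrand (n + 1) α).1
    (Filter.Eventually.of_forall fun x β _ => ?_) ?_
    (Filter.Eventually.of_forall fun x β _ => ?_)).2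
  · simp [norm_cubicWeight, pow_mul]
  · simpa using (integrable_pow_mul_exp_neg_sq_div_two (3 * (n + 1))).norm
  · exact ((hasDerivAt_cubicWeight_param β x).const_mul _).congr_deriv (by ring)

lemma hasDerivAt_cubicWeight (α x : ℝ) :
    HasDerivAt (cubicWeight α)
      ((-(x : ℂ) + 3 * Complex.I * α * (x : ℂ) ^ 2) * cubicWeight α x) x := by
  have h : HasDerivAt (fun z : ℂ => -z ^ 2 / 2 + Complex.I * α * z ^ 3)
      (-(x : ℂ) + 3 * Complex.I * α * (x : ℂ) ^ 2) (x : ℂ) :=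
    (((hasDerivAt_pow 2 (x : ℂ)).neg.div_const 2).add
      ((hasDerivAt_pow 3 (x : ℂ)).const_mul (Complex.I * α))).congr_deriv (by push_cast; ring)
  exact h.comp_ofReal.cexp.congr_deriv (by rw [cubicWeight]; ring)

lemma hasDerivAt_eval_mul_cubicWeight (p : ℂ[X]) (α x : ℝ) :
    HasDerivAt (fun y : ℝ => p.eval (y : ℂ) * cubicWeight α y)
      ((derivative p + p * (-X + C (3 * Complex.I * α) * X ^ 2)).eval (x : ℂ) *
        cubicWeight α x) x :=
  ((p.hasDerivAt (x : ℂ)).comp_ofReal.mul (hasDerivAt_cubicWeight α x)).congr_deriv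
    (by simp only [eval_add, eval_mul, eval_neg, eval_X, eval_C, eval_pow]; ring)

lemma integral_eval_derivative_add_mul_cubicWeight (p : ℂ[X]) (α : ℝ) :
    ∫ x : ℝ, (derivative p + p * (-X + C (3 * Complex.I * α) * X ^ 2)).eval (x : ℂ) *
      cubicWeight α x = 0 :=
  integral_eq_zero_of_hasDerivAt_of_integrable (hasDerivAt_eval_mul_cubicWeight p α)
    (integrable_eval_mul_cubicWeight _ α) (integrable_eval_mul_cubicWeight p α)

lemma cubicMoment_ode (α : ℝ) :
    27 * (α : ℂ) ^ 3 * cubicMoment 2 α + (1 + 81 * (α : ℂ) ^ 2) * cubicMoment 1 α +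
      15 * (α : ℂ) * cubicMoment 0 α = 0 := by
  have i2 := (integrable_cubicMoment_integrand 2 α).const_mul (27 * (α : ℂ) ^ 3)
  have i1 := (integrable_cubicMoment_integrand 1 α).const_mul (1 + 81 * (α : ℂ) ^ 2)
  have i0 := (integrable_cubicMoment_integrand 0 α).const_mul (15 * (α : ℂ))
  simp only [cubicMoment]
  rw [← integral_const_mul, ← integral_const_mul, ← integral_const_mul, ← integral_add i2 i1,
    ← integral_add (by exact i2.add i1) i0]
  rw [← integral_eval_derivative_add_mul_cubicWeight
    (C (9 * Complex.I * (α : ℂ) ^ 2) * X ^ 4 + C (3 * (α : ℂ)) * X ^ 3 - C Complex.I * X ^ 2 +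
      C (15 * (α : ℂ)) * X - C (2 * Complex.I)) α]
  congr 1 with x
  simp only [pow_one, pow_zero, one_mul, derivative_add, derivative_sub, derivative_C_mul_X_pow,
    derivative_C_mul_X, derivative_C, eval_add, eval_sub, eval_mul, eval_neg, eval_pow, eval_C,
    eval_X, eval_zero]
  linear_combination (3 * (α : ℂ) * (x : ℂ) ^ 4 + 6 * α * (x : ℂ) ^ 2) * cubicWeight α x * I_sq

lemma cubicI_eq_mul_cubicMoment_zero :
    cubicI = fun α => ((1 / Real.sqrt (2 * π) : ℝ) : ℂ) * cubicMoment 0 α := by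
  ext α
  simp [cubicI, cubicMoment, cubicWeight]

/-- The cubic-model integral is twice differentiable and satisfies the ODE
`27 α³ I'' + (1 + 81 α²) I' + 15 α I = 0`. -/
theorem cubicI_ode :
    (∀ α : ℝ, DifferentiableAt ℝ cubicI α) ∧
    (∀ α : ℝ, DifferentiableAt ℝ (deriv cubicI) α) ∧
    ∀ α : ℝ, 27 * (α : ℂ) ^ 3 * deriv (deriv cubicI) α +
        (1 + 81 * (α : ℂ) ^ 2) * deriv cubicI α + 15 * (α : ℂ) * cubicI α = 0 := by
  set c : ℂ := ((1 / Real.sqrt (2 * π) : ℝ) : ℂ)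
  have hI (α : ℝ) : HasDerivAt cubicI (c * cubicMoment 1 α) α := by
    rw [cubicI_eq_mul_cubicMoment_zero]
    exact (hasDerivAt_cubicMoment 0 α).const_mul c
  have hI' (α : ℝ) : HasDerivAt (deriv cubicI) (c * cubicMoment 2 α) α := by
    rw [funext fun β => (hI β).deriv]
    exact (hasDerivAt_cubicMoment 1 α).const_mul c
  refine ⟨fun α => (hI α).differentiableAt, fun α => (hI' α).differentiableAt, fun α => ?_⟩
  rw [(hI' α).deriv, (hI α).deriv, cubicI_eq_mul_cubicMoment_zero]
  linear_combination c * cubicMoment_ode α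
end

section
/- Define I : ℝ → ℂ by I(α) = (1/√(2π)) · ∫_ℝ exp(−x²/2 + i·α·x³) dx, and let α : ℕ → ℝ be a sequence. If the partial products ∏_{k=1}^{N} I(α_k) converge, as N → ∞, to a limit L with L real and L > 0, then α_k → 0 as k → ∞. -/
/-!
With `X` a standard Gaussian, `cubicI α = 𝔼[exp (iαX³)]` is the characteristic function of the
law of `X³`. Convergence of the partial products to `L ≠ 0` forces `cubicI (α k) → 1`.
A characteristic function is continuous; this one tends to `0` at infinity by Riemann–Lebesgue
(the law of `X³` has a density), and it takes the value `1` only at `0`: `charFun μ t = 1`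
with `t ≠ 0` would concentrate `μ` on the countable lattice `(2π / t) ℤ`, which an atomless law
cannot charge. By compactness, the preimage of a small neighbourhood of `1` is then a small
neighbourhood of `0`.
-/

open MeasureTheory Real Filter

open Topology ProbabilityTheory

theorem tendsto_one_of_tendsto_prod_range {G₀ : Type*} [CommGroupWithZero G₀]
    [TopologicalSpace G₀] [ContinuousMul G₀] [ContinuousInv₀ G₀] [T1Space G₀] {f : ℕ → G₀}
    {L : G₀} (hL : L ≠ 0) (h : Tendsto (fun N => ∏ k ∈ Finset.range N, f k) atTop (𝓝 L)) :
    Tendsto f atTop (𝓝 1) := by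
  have hquot := (h.comp (tendsto_add_atTop_nat 1)).div h hL
  rw [div_self hL] at hquot
  refine hquot.congr' ?_
  filter_upwards [h.eventually_ne hL] with n hn
  simp [Finset.prod_range_succ, mul_div_cancel_left₀ _ hn]

theorem comap_nhds_le_nhds_of_tendsto_cocompact {X Y : Type*} [TopologicalSpace X]
    [TopologicalSpace Y] [T2Space Y] {f : X → Y} (hf : Continuous f) {x₀ : X} {y c : Y}
    (hfib : ∀ x, f x = y → x = x₀) (hc : Tendsto f (cocompact X) (𝓝 c)) (hyc : y ≠ c) :
    comap f (𝓝 y) ≤ 𝓝 x₀ := by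
  have hdisj : Disjoint (comap f (𝓝 y)) (cocompact X) :=
    (disjoint_comap (disjoint_nhds_nhds.2 hyc)).mono_right hc.le_comap
  obtain ⟨K, hKmem, hK⟩ := (disjoint_cocompact_right _).1 hdisj
  refine hK.le_nhds_of_unique_clusterPt hKmem fun x _ hx => hfib x ?_
  exact eq_of_nhds_neBot (hx.map hf.continuousAt tendsto_comap)

theorem charFun_ne_one {μ : Measure ℝ} [IsProbabilityMeasure μ] [NullSingletonClass μ] {t : ℝ}
    (ht : t ≠ 0) : charFun μ t ≠ 1 := by
  intro h
  have hcos : Integrable (fun x => cos (t * x)) μ :=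
    (integrable_const 1).mono' (by fun_prop) (.of_forall fun x => abs_cos_le_one _)
  have hexp : Integrable (fun x : ℝ => Complex.exp ((t * x : ℝ) * Complex.I)) μ :=
    (integrable_const 1).mono' (by fun_prop)
      (.of_forall fun x => (Complex.norm_exp_ofReal_mul_I _).le)
  have hre : (charFun μ t).re = ∫ x, cos (t * x) ∂μ := by
    have := integral_re hexp
    simp only [RCLike.re_to_complex, Complex.exp_ofReal_mul_I_re] at this
    rw [this, charFun_apply_real]
    push_cast
    rfl
  have hint : ∫ x, (1 - cos (t * x)) ∂μ = 0 := by
    rw [integral_sub (integrable_const 1) hcos, ← hre, h]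
    simp
  have hae : ∀ᵐ x ∂μ, cos (t * x) = 1 := by
    filter_upwards [(integral_eq_zero_iff_of_nonneg (fun x => sub_nonneg.2 (cos_le_one _))
      ((integrable_const 1).sub hcos)).1 hint] with x hx
    simp only [Pi.zero_apply, sub_eq_zero] at hx
    exact hx.symm
  have hlattice : {x | cos (t * x) = 1}.Countable := by
    refine (Set.countable_range fun n : ℤ => n * (2 * π) / t).mono fun x hx => ?_
    obtain ⟨n, hn⟩ := (cos_eq_one_iff _).1 hx
    exact ⟨n, by simp only [hn]; field_simp⟩
  have hfalse : ∀ᵐ x ∂μ, False := (hae.and (hlattice.ae_notMem μ)).mono fun _ hx => hx.2 hx.1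
  exact IsProbabilityMeasure.ne_zero μ (by simpa using hfalse)

theorem tendsto_integral_exp_mul_I_mul_cocompact (f : ℝ → ℂ) :
    Tendsto (fun t : ℝ => ∫ y : ℝ, Complex.exp (t * y * Complex.I) * f y)
      (cocompact ℝ) (𝓝 0) := by
  have hscale : Tendsto (fun t : ℝ => t * -(2 * π)⁻¹) (cocompact ℝ) (cocompact ℝ) :=
    (Homeomorph.mulRight₀ _ (by simp [pi_ne_zero])).isClosedEmbedding.tendsto_cocompact
  refine ((Real.tendsto_integral_exp_smul_cocompact f).comp hscale).congr fun t => ?_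
  refine integral_congr_ae (.of_forall fun y => ?_)
  dsimp only
  rw [Circle.smul_def, Real.fourierChar_apply]
  congr 2
  push_cast
  field_simp

theorem cube_injective : Function.Injective fun x : ℝ => x ^ 3 :=
  (Odd.strictMono_pow (by decide)).injective

theorem cube_surjective : Function.Surjective fun x : ℝ => x ^ 3 := by
  refine Continuous.surjective (by fun_prop) (tendsto_pow_atTop three_ne_zero) ?_
  refine (tendsto_neg_atTop_atBot.comp ((tendsto_pow_atTop three_ne_zero).comp
    tendsto_neg_atBot_atTop)).congr fun x => ?_
  simp [Odd.neg_pow (by decide : Odd 3)]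

theorem measurableEmbedding_cube : MeasurableEmbedding fun x : ℝ => x ^ 3 :=
  (measurable_id.pow_const 3).measurableEmbedding cube_injective

noncomputable def cubedGaussian : Measure ℝ := (gaussianReal 0 1).map (· ^ 3)

instance : IsProbabilityMeasure cubedGaussian :=
  Measure.isProbabilityMeasure_map (by fun_prop)

instance : NullSingletonClass cubedGaussian := by
  refine ⟨fun y => ?_⟩
  rw [cubedGaussian, Measure.map_apply (by fun_prop) (measurableSet_singleton y)]
  exact gaussianReal_absolutelyContinuous 0 one_ne_zero
    ((Set.subsingleton_singleton.preimage cube_injective).measure_zero _)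

/-- `|y| ^ (3⁻¹ : ℝ) = |∛y|`: as the Gaussian density is even, this avoids `rpow` at negative
bases, where it takes junk values. -/
noncomputable def cubedGaussianPDF (y : ℝ) : ℝ :=
  gaussianPDFReal 0 1 (|y| ^ (3⁻¹ : ℝ)) / (3 * (|y| ^ (3⁻¹ : ℝ)) ^ 2)

theorem abs_deriv_mul_cubedGaussianPDF_cube {x : ℝ} (hx : x ≠ 0) :
    |3 * x ^ 2| * cubedGaussianPDF (x ^ 3) = gaussianPDFReal 0 1 x := by
  have hroot : |x ^ 3| ^ (3⁻¹ : ℝ) = |x| := by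
    rw [abs_pow]
    exact_mod_cast pow_rpow_inv_natCast (abs_nonneg x) three_ne_zero
  rw [cubedGaussianPDF, hroot, sq_abs, abs_of_pos (by positivity)]
  field_simp
  simp [gaussianPDFReal, sq_abs]

theorem integral_cubedGaussian {E : Type*} [NormedAddCommGroup E] [NormedSpace ℝ E]
    (φ : ℝ → E) : ∫ y, φ y ∂cubedGaussian = ∫ y, cubedGaussianPDF y • φ y := by
  have hcube : ∀ x ∈ Set.univ, HasDerivWithinAt (fun x : ℝ => x ^ 3) (3 * x ^ 2) Set.univ x :=
    fun x _ => by simpa using hasDerivAt_pow 3 x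
  have hchange := integral_image_eq_integral_abs_deriv_smul MeasurableSet.univ hcube
    cube_injective.injOn fun y => cubedGaussianPDF y • φ y
  rw [Set.image_univ_of_surjective cube_surjective, setIntegral_univ, setIntegral_univ]
    at hchange
  rw [hchange, cubedGaussian, measurableEmbedding_cube.integral_map,
    integral_gaussianReal_eq_integral_smul one_ne_zero]
  refine integral_congr_ae ((Measure.ae_ne volume 0).mono fun x hx => ?_)
  dsimp only
  rw [smul_smul, abs_deriv_mul_cubedGaussianPDF_cube hx]

theorem cubicI_eq_charFun (a : ℝ) : cubicI a = charFun cubedGaussian a := by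
  rw [charFun_apply_real, cubedGaussian, measurableEmbedding_cube.integral_map,
    integral_gaussianReal_eq_integral_smul one_ne_zero, cubicI, ← integral_const_mul]
  congr 1 with x
  rw [gaussianPDFReal, Complex.real_smul]
  push_cast
  rw [mul_assoc (_ : ℂ)⁻¹, ← Complex.exp_add]
  ring_nf

theorem tendsto_charFun_cubedGaussian_cocompact :
    Tendsto (charFun cubedGaussian) (cocompact ℝ) (𝓝 0) := by
  refine (tendsto_integral_exp_mul_I_mul_cocompact fun y => (cubedGaussianPDF y : ℂ)).congr
    fun t => ?_
  rw [charFun_apply_real, integral_cubedGaussian]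
  refine integral_congr_ae (.of_forall fun y => ?_)
  dsimp only
  rw [Complex.real_smul, mul_comm]

/-- If the partial products `∏_{k<N} I(α_k)` converge to a real positive limit `L`,
then the coupling sequence tends to zero: `α_k → 0`. -/
theorem tendsto_zero_of_prod_cubicI_pos (α : ℕ → ℝ) (L : ℝ) (hL : 0 < L)
    (h : Tendsto (fun N => ∏ k ∈ Finset.range N, cubicI (α k)) atTop (nhds (L : ℂ))) :
    Tendsto α atTop (nhds 0) := by
  have hfactors : Tendsto (charFun cubedGaussian ∘ α) atTop (𝓝 1) := by
    simpa only [Function.comp_def, cubicI_eq_charFun] using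
      tendsto_one_of_tendsto_prod_range (Complex.ofReal_ne_zero.2 hL.ne') h
  have hfib : ∀ t, charFun cubedGaussian t = 1 → t = 0 := fun t ht =>
    by_contra fun ht0 => charFun_ne_one ht0 ht
  exact (tendsto_comap_iff.2 hfactors).mono_right
    (comap_nhds_le_nhds_of_tendsto_cocompact continuous_charFun hfib
      tendsto_charFun_cubedGaussian_cocompact one_ne_zero)
end

section
/- Define I : ℝ → ℂ by I(α) = (1/√(2π)) · ∫_ℝ exp(−x²/2 + i·α·x³) dx. Then for every natural number m, the difference I(α) − Σ_{n=0}^{m} ((−1)^n / 8^n) · ((6n)! / ((2n)!·(3n)!)) · α^{2n} is O(α^{2m+2}) as α → 0; that is, I admits the asymptotic expansion Σ_{n ≥ 0} ((−1)^n/8^n)·((6n)!/((2n)!(3n)!))·α^{2n} at α = 0. -/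
/-!
Writing `X` for a standard Gaussian variable, `I(α) = 𝔼[exp(iαX³)]`. Expanding `e^{it}` to order
`N` with the remainder bound `|t|^N / N!` and integrating against the law of `X` gives
`I(α) = ∑_{k<N} (iα)^k / k! · 𝔼[X^{3k}] + O(|α|^N 𝔼|X|^{3N})`. Gaussian integration by parts
gives `𝔼[X^{k+2}] = (k+1) 𝔼[X^k]`, so odd moments vanish and `𝔼[X^{2j}] = (2j)! / (2^j j!)`;
taking `N = 2m + 2`, the surviving terms `k = 2n` are the stated coefficients.
-/

open MeasureTheory Real Filter Asymptotics
open scoped Nat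

open scoped Complex NNReal ComplexConjugate
open Finset ProbabilityTheory

namespace ProbabilityTheory

lemma integrable_gaussianPDFReal_smul {E : Type*} [NormedAddCommGroup E] [NormedSpace ℝ E]
    {μ : ℝ} {v : ℝ≥0} (hv : v ≠ 0) {f : ℝ → E} (hf : Integrable f (gaussianReal μ v)) :
    Integrable (fun x => gaussianPDFReal μ v x • f x) := by
  rw [gaussianReal_of_var_ne_zero _ hv, integrable_withDensity_iff_integrable_smul'
    (measurable_gaussianPDF _ _) (ae_of_all _ fun _ => gaussianPDF_lt_top)] at hf
  simpa using hf

lemma integrable_pow_gaussianReal (μ : ℝ) (v : ℝ≥0) (k : ℕ) :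
    Integrable (fun x => x ^ k) (gaussianReal μ v) :=
  integrable_pow_of_mem_interior_integrableExpSet (X := id) (by simp) k

lemma hasDerivAt_neg_var_mul_gaussianPDFReal {v : ℝ≥0} (hv : v ≠ 0) (x : ℝ) :
    HasDerivAt (fun y => -(v * gaussianPDFReal 0 v y)) (x * gaussianPDFReal 0 v x) x := by
  have hv' : (v : ℝ) ≠ 0 := by exact_mod_cast hv
  have hexponent : HasDerivAt (fun y : ℝ => -(y - 0) ^ 2 / (2 * v)) (-x / v) x :=
    (((hasDerivAt_id x).sub_const 0).pow 2).neg.div_const (2 * (v : ℝ)) |>.congr_deriv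
      (by field_simp; simp)
  exact ((hexponent.exp.const_mul (√(2 * π * v))⁻¹).const_mul (v : ℝ)).neg.congr_deriv
    (by simp only [gaussianPDFReal]; field_simp)

/-- Gaussian integration by parts, with `x ↦ -v · φ(x)` as an antiderivative of `x φ(x)`. -/
theorem integral_pow_add_two_gaussianReal (v : ℝ≥0) (k : ℕ) :
    ∫ x, x ^ (k + 2) ∂gaussianReal 0 v = (k + 1) * v * ∫ x, x ^ k ∂gaussianReal 0 v := by
  rcases eq_or_ne v 0 with rfl | hv
  · simp
  simp only [integral_gaussianReal_eq_integral_smul hv, smul_eq_mul]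
  have hpow (j : ℕ) : Integrable fun x => gaussianPDFReal 0 v x * x ^ j :=
    integrable_gaussianPDFReal_smul hv (integrable_pow_gaussianReal 0 v j)
  have hibp := integral_mul_deriv_eq_deriv_mul_of_integrable
    (u := fun x => x ^ (k + 1)) (u' := fun x => (k + 1) * x ^ k)
    (v := fun x => -(v * gaussianPDFReal 0 v x)) (v' := fun x => x * gaussianPDFReal 0 v x)
    (fun x _ => by simpa using hasDerivAt_pow (k + 1) x)
    (fun x _ => hasDerivAt_neg_var_mul_gaussianPDFReal hv x)
    ((hpow (k + 2)).congr (ae_of_all _ fun x => by simp only [Pi.mul_apply]; ring))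
    (((hpow k).const_mul (-((k + 1) * v))).congr
      (ae_of_all _ fun x => by simp only [Pi.mul_apply]; ring))
    (((hpow (k + 1)).const_mul (-v)).congr
      (ae_of_all _ fun x => by simp only [Pi.mul_apply]; ring))
  calc ∫ x, gaussianPDFReal 0 v x * x ^ (k + 2)
      = ∫ x, x ^ (k + 1) * (x * gaussianPDFReal 0 v x) := by congr 1; ext x; ring
    _ = (k + 1) * v * ∫ x, gaussianPDFReal 0 v x * x ^ k := by
      rw [hibp, ← integral_neg, ← integral_const_mul]; congr 1; ext x; ring

theorem integral_pow_two_mul_add_one_gaussianReal (v : ℝ≥0) (n : ℕ) :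
    ∫ x, x ^ (2 * n + 1) ∂gaussianReal 0 v = 0 := by
  induction n with
  | zero => simp [integral_id_gaussianReal]
  | succ n ih => rw [show 2 * (n + 1) + 1 = 2 * n + 1 + 2 by ring,
      integral_pow_add_two_gaussianReal, ih, mul_zero]

theorem integral_pow_two_mul_gaussianReal (v : ℝ≥0) (n : ℕ) :
    ∫ x, x ^ (2 * n) ∂gaussianReal 0 v = v ^ n * (2 * n)! / (2 ^ n * n !) := by
  induction n with
  | zero => simp
  | succ n ih =>
    rw [show 2 * (n + 1) = 2 * n + 2 by ring, integral_pow_add_two_gaussianReal, ih,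
      Nat.factorial_succ, Nat.factorial_succ, Nat.factorial_succ]
    push_cast
    field_simp
    ring

end ProbabilityTheory

lemma Finset.sum_range_two_mul_of_odd_eq_zero {M : Type*} [AddCommMonoid M] (f : ℕ → M)
    (hf : ∀ n, f (2 * n + 1) = 0) (N : ℕ) :
    ∑ k ∈ range (2 * N), f k = ∑ n ∈ range N, f (2 * n) := by
  induction N with
  | zero => simp
  | succ N ih => rw [mul_add, mul_one, sum_range_succ, sum_range_succ, hf, add_zero, ih,
      sum_range_succ]

namespace Complex

noncomputable def expIMulRemainder (N : ℕ) (t : ℝ) : ℂ :=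
  cexp (I * t) - ∑ k ∈ range N, (I * t) ^ k / k !

lemma continuous_expIMulRemainder (N : ℕ) : Continuous (expIMulRemainder N) := by
  unfold expIMulRemainder
  fun_prop

@[simp]
lemma expIMulRemainder_succ_zero (N : ℕ) : expIMulRemainder (N + 1) 0 = 0 := by
  simp [expIMulRemainder, sum_range_succ', zero_pow]

lemma hasDerivAt_I_mul_pow_succ_div_factorial (k : ℕ) (t : ℝ) :
    HasDerivAt (fun t : ℝ => (I * t) ^ (k + 1) / (k + 1)!) (I * ((I * t) ^ k / k !)) t := by
  have h := (((hasDerivAt_id (t : ℂ)).const_mul I).pow (k + 1)).comp_ofReal.div_const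
    ((k + 1)! : ℂ)
  refine h.congr_deriv ?_
  rw [Nat.factorial_succ]
  push_cast
  field_simp
  simp

lemma hasDerivAt_expIMulRemainder_succ (N : ℕ) (t : ℝ) :
    HasDerivAt (expIMulRemainder (N + 1)) (I * expIMulRemainder N t) t := by
  have hexp : HasDerivAt (fun t : ℝ => cexp (I * t)) (cexp (I * t) * I) t :=
    (((hasDerivAt_id (t : ℂ)).const_mul I).cexp).comp_ofReal.congr_deriv (by simp)
  have hsum := (HasDerivAt.fun_sum fun k (_ : k ∈ range N) =>
    hasDerivAt_I_mul_pow_succ_div_factorial k t).const_add 1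
  have heq : expIMulRemainder (N + 1) =
      fun t : ℝ => cexp (I * t) - (1 + ∑ k ∈ range N, (I * t) ^ (k + 1) / (k + 1)!) := by
    ext t; simp [expIMulRemainder, sum_range_succ', add_comm]
  rw [heq]
  refine (hexp.sub hsum).congr_deriv ?_
  simp only [expIMulRemainder, ← mul_sum]
  ring

lemma expIMulRemainder_neg (N : ℕ) (t : ℝ) :
    expIMulRemainder N (-t) = conj (expIMulRemainder N t) := by
  simp [expIMulRemainder, map_sum, ← exp_conj, div_eq_mul_inv]

/-- Since `R_{N+1}(t) = ∫₀ᵗ i R_N`, the bound integrates up from `|R₀(t)| = |e^{it}| = 1`;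
negative `t` follows from `R_N(-t) = conj (R_N t)`. -/
lemma norm_expIMulRemainder_le (N : ℕ) (t : ℝ) : ‖expIMulRemainder N t‖ ≤ |t| ^ N / N ! := by
  induction N generalizing t with
  | zero => simp [expIMulRemainder, norm_exp]
  | succ N ih =>
    wlog ht : 0 ≤ t with H
    · simpa [expIMulRemainder_neg] using H N ih (-t) (by linarith)
    have hcont := (continuous_expIMulRemainder N).const_smul I
    have hftc : expIMulRemainder (N + 1) t = ∫ s in (0 : ℝ)..t, I * expIMulRemainder N s := by
      rw [intervalIntegral.integral_eq_sub_of_hasDerivAt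
        (fun s _ => hasDerivAt_expIMulRemainder_succ N s) (hcont.intervalIntegrable 0 t)]
      simp
    have hbound_cont : Continuous fun s : ℝ => s ^ N / N ! := by fun_prop
    calc ‖expIMulRemainder (N + 1) t‖
        ≤ ∫ s in (0 : ℝ)..t, ‖I * expIMulRemainder N s‖ := by
          rw [hftc]; exact intervalIntegral.norm_integral_le_integral_norm ht
      _ ≤ ∫ s in (0 : ℝ)..t, s ^ N / N ! := by
          refine intervalIntegral.integral_mono_on ht (hcont.norm.intervalIntegrable 0 t)
            (hbound_cont.intervalIntegrable 0 t) fun s hs => ?_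
          simpa [abs_of_nonneg hs.1] using ih s
      _ = |t| ^ (N + 1) / (N + 1)! := by
          rw [intervalIntegral.integral_div, integral_pow, abs_of_nonneg ht, Nat.factorial_succ]
          push_cast
          field_simp
          simp

end Complex

section

open Complex

theorem norm_integral_cexp_I_mul_sub_sum_le {Ω : Type*} [MeasurableSpace Ω] {μ : Measure Ω}
    {f : Ω → ℝ} {N : ℕ} (hf : AEMeasurable f μ)
    (hint : ∀ k ≤ N, Integrable (fun ω => f ω ^ k) μ) (t : ℝ) :
    ‖∫ ω, cexp (I * ↑(t * f ω)) ∂μ - ∑ k ∈ range N, (I * t) ^ k / k ! * ∫ ω, f ω ^ k ∂μ‖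
      ≤ |t| ^ N / N ! * ∫ ω, |f ω| ^ N ∂μ := by
  have hbound : ∀ ω, ‖expIMulRemainder N (t * f ω)‖ ≤ |t| ^ N / N ! * |f ω| ^ N := fun ω =>
    (norm_expIMulRemainder_le N _).trans_eq (by rw [abs_mul, mul_pow]; ring)
  have hbound_int : Integrable (fun ω => |t| ^ N / N ! * |f ω| ^ N) μ := by
    simpa only [abs_pow] using (hint N le_rfl).abs.const_mul (|t| ^ N / N !)
  have hrem_int : Integrable (fun ω => expIMulRemainder N (t * f ω)) μ :=
    hbound_int.mono' ((continuous_expIMulRemainder N).comp_aestronglyMeasurable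
      (hf.const_mul t).aestronglyMeasurable) (ae_of_all _ hbound)
  have hterm_int (k : ℕ) (hk : k ∈ range N) :
      Integrable (fun ω => (I * t) ^ k / k ! * ((f ω ^ k : ℝ) : ℂ)) μ :=
    (hint k (mem_range.1 hk).le).ofReal.const_mul _
  have hsplit : ∀ ω, cexp (I * ↑(t * f ω)) =
      ∑ k ∈ range N, (I * t) ^ k / k ! * ((f ω ^ k : ℝ) : ℂ) + expIMulRemainder N (t * f ω) := by
    intro ω
    suffices ∑ k ∈ range N, (I * t) ^ k / k ! * ((f ω ^ k : ℝ) : ℂ) =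
        ∑ k ∈ range N, (I * ↑(t * f ω)) ^ k / (k ! : ℂ) by
      rw [expIMulRemainder, this, add_sub_cancel]
    refine sum_congr rfl fun k _ => ?_
    push_cast
    ring
  have hmoment (k : ℕ) : ∫ ω, ((f ω ^ k : ℝ) : ℂ) ∂μ = ((∫ ω, f ω ^ k ∂μ : ℝ) : ℂ) :=
    integral_ofReal
  calc _ = ‖∫ ω, expIMulRemainder N (t * f ω) ∂μ‖ := by
        simp_rw [hsplit]
        rw [integral_add (integrable_finsetSum _ hterm_int) hrem_int,
          integral_finsetSum _ hterm_int]
        simp_rw [integral_const_mul, hmoment, add_sub_cancel_left]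
    _ ≤ ∫ ω, |t| ^ N / N ! * |f ω| ^ N ∂μ :=
        norm_integral_le_of_norm_le hbound_int (ae_of_all _ hbound)
    _ = |t| ^ N / N ! * ∫ ω, |f ω| ^ N ∂μ := integral_const_mul _ _

lemma cubicI_eq_integral_gaussianReal (α : ℝ) :
    cubicI α = ∫ x, cexp (I * ↑(α * x ^ 3)) ∂gaussianReal 0 1 := by
  rw [integral_gaussianReal_eq_integral_smul one_ne_zero, cubicI, ← integral_const_mul]
  congr 1 with x
  simp only [gaussianPDFReal, real_smul, ofReal_mul, ofReal_exp, mul_assoc, ← Complex.exp_add]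
  push_cast
  ring_nf

lemma sum_moments_cube_gaussianReal (m : ℕ) (α : ℝ) :
    ∑ k ∈ range (2 * m + 2), (I * α) ^ k / k ! * ((∫ x, (x ^ 3) ^ k ∂gaussianReal 0 1 : ℝ) : ℂ) =
      ∑ n ∈ range (m + 1),
        ((-1 : ℂ) ^ n / 8 ^ n) * ((6 * n)! / ((2 * n)! * (3 * n)!)) * (α : ℂ) ^ (2 * n) := by
  simp_rw [← pow_mul]
  rw [show 2 * m + 2 = 2 * (m + 1) by ring, sum_range_two_mul_of_odd_eq_zero]
  · refine sum_congr rfl fun n _ => ?_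
    rw [show 3 * (2 * n) = 2 * (3 * n) by ring, integral_pow_two_mul_gaussianReal,
      mul_pow, pow_mul I, I_sq, show 2 * (3 * n) = 6 * n by ring]
    push_cast
    rw [pow_mul (2 : ℂ), show (2 : ℂ) ^ 3 = 8 by norm_num]
    field_simp
    ring
  · intro n
    rw [show 3 * (2 * n + 1) = 2 * (3 * n + 1) + 1 by ring,
      integral_pow_two_mul_add_one_gaussianReal, ofReal_zero, mul_zero]

end

/-- The asymptotic (perturbative) expansion of the cubic-model integral at `α = 0`:
`I(α) = ∑_{n=0}^{m} ((-1)ⁿ/8ⁿ) ((6n)!/((2n)!(3n)!)) α^{2n} + O(α^{2m+2})`. -/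
theorem cubicI_asymptotic_expansion (m : ℕ) :
    (fun α : ℝ => cubicI α -
        ∑ n ∈ Finset.range (m + 1),
          ((-1 : ℂ) ^ n / 8 ^ n) * ((6 * n)! / ((2 * n)! * (3 * n)!)) * (α : ℂ) ^ (2 * n))
      =O[nhdsWithin (0 : ℝ) {0}ᶜ] fun α : ℝ => α ^ (2 * m + 2) := by
  have hmoments (k : ℕ) (_ : k ≤ 2 * m + 2) :
      Integrable (fun x : ℝ => (x ^ 3) ^ k) (gaussianReal 0 1) := by
    simpa only [← pow_mul] using integrable_pow_gaussianReal 0 1 (3 * k)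
  refine IsBigO.of_bound (((2 * m + 2)! : ℝ)⁻¹ * ∫ x, |x ^ 3| ^ (2 * m + 2) ∂gaussianReal 0 1)
    (Eventually.of_forall fun α => ?_)
  rw [cubicI_eq_integral_gaussianReal, ← sum_moments_cube_gaussianReal, norm_pow,
    Real.norm_eq_abs]
  exact (norm_integral_cexp_I_mul_sub_sum_le (by fun_prop) hmoments α).trans_eq (by ring)
end

section
/- Let J ⊆ ℝ be an open interval and let W : ℂ × ℝ → ℂ be a function of (β, α) such that on an open set containing the relevant points: W is jointly differentiable, the partial derivatives ∂W/∂β (complex derivative in β) and ∂W/∂α (real derivative in α) exist and satisfy (1 − 3·i·α·β)·∂W/∂β(β,α) − 9·i·α²·∂W/∂α(β,α) − (3·i·α + β) = 0. Suppose β̃ : J → ℂ is differentiable and satisfies ∂W/∂β(β̃(α), α) = 0 for all α ∈ J, and define w : J → ℂ by w(α) = W(β̃(α), α). Then w is differentiable on J and 9·i·α²·w'(α) + 3·i·α + β̃(α) = 0 for all α ∈ J. -/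
/-! By the chain rule, `w' = ∂_βW · β̃' + ∂_αW` along the curve `α ↦ (β̃ α, α)`. Stationarity kills
the first term, and at a stationary point the equation for `W` reduces to
`-9iα² ∂_αW - (3iα + β̃) = 0`. -/

open ContinuousLinearMap

section GraphCurve

variable {𝕜 E G : Type*} [NontriviallyNormedField 𝕜]
  [NormedAddCommGroup E] [NormedSpace 𝕜 E] [NormedAddCommGroup G] [NormedSpace 𝕜 G]

theorem HasFDerivAt.hasDerivAt_prodMk_right {f : E × 𝕜 → G} {L : E × 𝕜 →L[𝕜] G} {e : E} {t : 𝕜}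
    (hf : HasFDerivAt f L (e, t)) : HasDerivAt (fun s => f (e, s)) (L (0, 1)) t :=
  (hf.comp t (hasFDerivAt_prodMk_right e t)).hasDerivAt

theorem hasDerivAt_comp_graph_of_hasFDerivAt_zero {f : E → 𝕜 → G} {γ : 𝕜 → E} {t : 𝕜}
    (hf : DifferentiableAt 𝕜 (fun q : E × 𝕜 => f q.1 q.2) (γ t, t))
    (hcrit : HasFDerivAt (fun z => f z t) (0 : E →L[𝕜] G) (γ t))
    (hγ : DifferentiableAt 𝕜 γ t) :
    HasDerivAt (fun s => f (γ s) s) (deriv (fun s => f (γ t) s) t) t := by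
  set L := fderiv 𝕜 (fun q : E × 𝕜 => f q.1 q.2) (γ t, t)
  have hL : HasFDerivAt (fun q : E × 𝕜 => f q.1 q.2) L (γ t, t) := hf.hasFDerivAt
  have hpartial : HasFDerivAt (fun z => f z t) (L.comp (inl 𝕜 E 𝕜)) (γ t) :=
    (hL.comp (γ t) (hasFDerivAt_prodMk_left (𝕜 := 𝕜) (γ t) t) :)
  have hL_inl : L.comp (inl 𝕜 E 𝕜) = 0 := hpartial.unique hcrit
  have hL_inr : L (0, 1) = deriv (fun s => f (γ t) s) t :=
    hL.hasDerivAt_prodMk_right.deriv.symm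
  have hchain : HasDerivAt (fun s => f (γ s) s) (L (deriv γ t, 1)) t :=
    hL.comp_hasDerivAt_of_eq t (hγ.hasDerivAt.prodMk (hasDerivAt_id t)) rfl
  have hsplit : L (deriv γ t, 1) = L.comp (inl 𝕜 E 𝕜) (deriv γ t) + L (0, 1) := by
    rw [comp_apply, inl_apply, ← map_add, Prod.mk_add_mk, add_zero, zero_add]
  rwa [hsplit, hL_inl, hL_inr, zero_apply, zero_add] at hchain

end GraphCurve

theorem stationary_action_equation_general (a b : ℝ) (W : ℂ → ℝ → ℂ)
    (U : Set (ℂ × ℝ))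
    (βt : ℝ → ℂ) (hmem : ∀ α ∈ Set.Ioo a b, (βt α, α) ∈ U)
    (hWjoint : ∀ p ∈ U, DifferentiableAt ℝ (fun q : ℂ × ℝ => W q.1 q.2) p)
    (hWβ : ∀ p ∈ U, DifferentiableAt ℂ (fun z : ℂ => W z p.2) p.1)
    (hPDE : ∀ p ∈ U,
      (1 - 3 * Complex.I * p.2 * p.1) * deriv (fun z : ℂ => W z p.2) p.1 -
        9 * Complex.I * (p.2 : ℂ) ^ 2 * deriv (fun t : ℝ => W p.1 t) p.2 -
        (3 * Complex.I * p.2 + p.1) = 0)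
    (hβt : ∀ α ∈ Set.Ioo a b, DifferentiableAt ℝ βt α)
    (hstat : ∀ α ∈ Set.Ioo a b, deriv (fun z : ℂ => W z α) (βt α) = 0) :
    ∀ α ∈ Set.Ioo a b, ∃ w' : ℂ,
      HasDerivAt (fun t : ℝ => W (βt t) t) w' α ∧
      9 * Complex.I * (α : ℂ) ^ 2 * w' + 3 * Complex.I * α + βt α = 0 := by
  intro α hα
  have hp := hmem α hα
  have hcrit : HasFDerivAt (fun z : ℂ => W z α) (0 : ℂ →L[ℝ] ℂ) (βt α) := by
    simpa [hstat α hα] using ((hWβ _ hp).hasDerivAt.hasFDerivAt.restrictScalars ℝ)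
  refine ⟨_, hasDerivAt_comp_graph_of_hasFDerivAt_zero (hWjoint _ hp) hcrit (hβt α hα), ?_⟩
  have hPDE_crit := hPDE _ hp
  rw [hstat α hα] at hPDE_crit
  linear_combination -hPDE_crit

/-- If `W(β, α)` satisfies, on an open set `U` containing the points `(β̃ α, α)` for
`α` in the open interval `(a, b)`, the equation
`(1 - 3iαβ) ∂W/∂β - 9iα² ∂W/∂α - (3iα + β) = 0`
(with `W` jointly differentiable and both partial derivatives existing on `U`),
and if `β̃` is differentiable with `∂W/∂β (β̃ α, α) = 0` for `α ∈ (a, b)`, then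
`w(α) = W(β̃ α, α)` is differentiable on `(a, b)` and satisfies
`9iα² w'(α) + 3iα + β̃ α = 0`. -/
theorem stationary_action_equation (a b : ℝ) (W : ℂ → ℝ → ℂ)
    (U : Set (ℂ × ℝ)) (hU : IsOpen U)
    (βt : ℝ → ℂ) (hmem : ∀ α ∈ Set.Ioo a b, (βt α, α) ∈ U)
    (hWjoint : ∀ p ∈ U, DifferentiableAt ℝ (fun q : ℂ × ℝ => W q.1 q.2) p)
    (hWβ : ∀ p ∈ U, DifferentiableAt ℂ (fun z : ℂ => W z p.2) p.1)
    (hWα : ∀ p ∈ U, DifferentiableAt ℝ (fun t : ℝ => W p.1 t) p.2)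
    (hPDE : ∀ p ∈ U,
      (1 - 3 * Complex.I * p.2 * p.1) * deriv (fun z : ℂ => W z p.2) p.1 -
        9 * Complex.I * (p.2 : ℂ) ^ 2 * deriv (fun t : ℝ => W p.1 t) p.2 -
        (3 * Complex.I * p.2 + p.1) = 0)
    (hβt : ∀ α ∈ Set.Ioo a b, DifferentiableAt ℝ βt α)
    (hstat : ∀ α ∈ Set.Ioo a b, deriv (fun z : ℂ => W z α) (βt α) = 0) :
    ∀ α ∈ Set.Ioo a b, ∃ w' : ℂ,
      HasDerivAt (fun t : ℝ => W (βt t) t) w' α ∧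
      9 * Complex.I * (α : ℂ) ^ 2 * w' + 3 * Complex.I * α + βt α = 0 :=
  stationary_action_equation_general a b W U βt hmem hWjoint hWβ hPDE hβt hstat
end

section
/- Define b : ℕ → ℂ on odd indices by b_1 = −3i and, for all k ≥ 0, b_{2k+3} = −6i · Σ_{n=0}^{k} (3(k−n)+1) · b_{2n+1} · b_{2k−2n+1}. Let f ∈ ℂ[[X]] be the formal power series f = Σ_{k ≥ 0} b_{2k+1} · X^{2k+1}. Then f satisfies the formal differential equation 9·i·X²·f·f' − 3·i·X·f² + 3·i·X + f = 0 in ℂ[[X]], where f' denotes the formal derivative of f. -/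
open PowerSeries

/-!
Write `f = X · g(X²)` with `g = ∑ b_{2k+1} Xᵏ`. Since `f' = g(X²) + 2X² g'(X²)`, the equation
for `f` is `X` times the image under `X ↦ X²` of `3i + g + 6iX g (g + 3X g') = 0`, and the
coefficient of `X^{k+1}` in the latter is exactly the defining recursion of `b_{2k+3}`.
-/

/-- The odd coefficients `b_{2k+1}` of the stationary source `β̃(α)`:
`bOdd k = b_{2k+1}`, with `b₁ = -3i` and
`b_{2k+3} = -6i ∑_{n=0}^{k} (3(k-n)+1) b_{2n+1} b_{2k-2n+1}`.
(For `n` in the summation range `n ≤ k`, so `min n k = n`.) -/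
noncomputable def bOdd : ℕ → ℂ
  | 0 => -3 * Complex.I
  | k + 1 => -6 * Complex.I *
      ∑ n ∈ Finset.range (k + 1),
        ((3 * (k - n) + 1 : ℕ) : ℂ) * bOdd (min n k) * bOdd (k - n)
  termination_by k => k
  decreasing_by
  · exact Nat.lt_succ_of_le (Nat.min_le_right n k)
  · exact Nat.lt_succ_of_le (Nat.sub_le k n)

namespace PowerSeries

variable {R : Type*} [CommRing R]

theorem derivative_expand (p : ℕ) (hp : p ≠ 0) (φ : R⟦X⟧) :
    d⁄dX R (expand p hp φ) = C (p : R) * X ^ (p - 1) * expand p hp (d⁄dX R φ) := by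
  rw [expand_apply, expand_apply, derivative_subst (.X_pow hp), Derivation.leibniz_pow,
    derivative_X, smul_eq_mul, nsmul_eq_mul, map_natCast]
  ring

theorem coeff_X_mul_derivative (φ : R⟦X⟧) (n : ℕ) :
    coeff n (X * d⁄dX R φ) = n * coeff n φ := by
  cases n with
  | zero => simp
  | succ n => rw [coeff_succ_X_mul, coeff_derivative, mul_comm, Nat.cast_succ]

theorem X_mul_expand_two_mk (a : ℕ → R) :
    X * expand 2 two_ne_zero (mk a) = mk fun m => if Odd m then a (m / 2) else 0 := by
  ext (_ | m)
  · simp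
  · have : Odd (m + 1) ↔ 2 ∣ m := by
      rw [Nat.odd_add_one, Nat.not_odd_iff_even, even_iff_two_dvd]
    rw [coeff_succ_X_mul, coeff_expand, coeff_mk, coeff_mk]
    by_cases h : 2 ∣ m
    · rw [if_pos h, if_pos (this.mpr h), Nat.succ_div_of_not_dvd (by omega)]
    · rw [if_neg h, if_neg (mt this.mp h)]

end PowerSeries

theorem bOdd_succ (k : ℕ) :
    bOdd (k + 1) = -6 * Complex.I *
      ∑ n ∈ Finset.range (k + 1), ((3 * (k - n) + 1 : ℕ) : ℂ) * bOdd n * bOdd (k - n) := by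
  rw [bOdd]
  refine congrArg _ (Finset.sum_congr rfl fun n hn => ?_)
  rw [min_eq_left (Nat.le_of_lt_succ (Finset.mem_range.mp hn))]

theorem mk_bOdd_reduced_ode :
    C (3 * Complex.I) + mk bOdd +
      C (6 * Complex.I) * X * mk bOdd * (mk bOdd + C 3 * (X * d⁄dX ℂ (mk bOdd))) = 0 := by
  ext (_ | k)
  · simp [bOdd]
  · rw [map_add, map_add, mul_assoc, mul_assoc, coeff_C_mul, coeff_succ_X_mul, coeff_mul,
      Finset.Nat.sum_antidiagonal_eq_sum_range_succ_mk, coeff_mk, bOdd_succ]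
    simp only [map_add, coeff_C_mul, coeff_X_mul_derivative, coeff_mk, coeff_C, Nat.succ_ne_zero,
      if_false, map_zero]
    rw [zero_add, Finset.mul_sum, Finset.mul_sum, ← Finset.sum_add_distrib]
    exact Finset.sum_eq_zero fun n _ => by push_cast; ring

/-- The formal power series `f = ∑_{k≥0} b_{2k+1} X^{2k+1}` of the stationary source
`β̃(α)` satisfies the formal differential equation
`9iX² f f' - 3iX f² + 3iX + f = 0`. -/
theorem betaTilde_formal_ode
    (f : PowerSeries ℂ)
    (hf : f = PowerSeries.mk fun m => if Odd m then bOdd (m / 2) else 0) :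
    PowerSeries.C (9 * Complex.I) * PowerSeries.X ^ 2 * f * (d⁄dX ℂ f) -
      PowerSeries.C (3 * Complex.I) * PowerSeries.X * f ^ 2 +
      PowerSeries.C (3 * Complex.I) * PowerSeries.X + f = 0 := by
  rw [← X_mul_expand_two_mk] at hf
  subst hf
  have hderiv : d⁄dX ℂ (X * expand 2 two_ne_zero (mk bOdd)) = expand 2 two_ne_zero (mk bOdd) +
      2 * X ^ 2 * expand 2 two_ne_zero (d⁄dX ℂ (mk bOdd)) := by
    rw [Derivation.leibniz, derivative_X, derivative_expand, smul_eq_mul, smul_eq_mul,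
      Nat.cast_ofNat, map_ofNat]
    ring
  have hE := congrArg (X * expand 2 two_ne_zero ·) mk_bOdd_reduced_ode
  simp only [map_add, map_mul, expand_C, expand_X, map_zero, mul_zero] at hE
  rw [hderiv]
  simp only [map_mul, map_ofNat] at hE ⊢
  linear_combination hE
end
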